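/- arXiv:2211.01905 — 3 statements merged into one kernel-verified Lean document; each statement's English description precedes it below -/
import Mathlib

section
/- For every digraph H, the fractional independence number and the fractional edge cover number of the contour of H equal those of the contour of the condensation H/∼, that is, α*(Γ(H)) = α*(Γ(H/∼)) and ρ*(Γ(H)) = ρ*(Γ(H/∼)). -/
noncomputable section

/-! ### Hypergraphs -/

/-- A hypergraph: a vertex set together with a set of nonempty hyperedges. -/
structure HGraph (V : Type) where
  verts : Set V
  edges : Set (Set V)
  edge_nonempty : ∀ e ∈ edges, e.Nonempty
  edge_subset : ∀ e ∈ edges, e ⊆ verts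

namespace HGraph

variable {V : Type}

/-- An independent set: no two of its vertices lie in a common hyperedge. -/
def IsIndepSet (H : HGraph V) (I : Set V) : Prop :=
  I ⊆ H.verts ∧ ∀ u ∈ I, ∀ v ∈ I, u ≠ v → ∀ e ∈ H.edges, ¬(u ∈ e ∧ v ∈ e)

/-- The independence number `α`. -/
def indepNum (H : HGraph V) : ℕ :=
  sSup {n | ∃ I : Set V, H.IsIndepSet I ∧ I.ncard = n}

/-- A fractional independent set: `μ : V(H) → [0,1]` with `∑_{v ∈ e} μ v ≤ 1` for each edge. -/
def IsFracIndep (H : HGraph V) (μ : V → ℝ) : Prop :=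
  (∀ v, 0 ≤ μ v ∧ μ v ≤ 1) ∧ (∀ v, v ∉ H.verts → μ v = 0) ∧
    ∀ e ∈ H.edges, (∑ᶠ v ∈ e, μ v) ≤ 1

/-- The weight of a (fractional independent) vertex-weighting. -/
def weight (H : HGraph V) (μ : V → ℝ) : ℝ := ∑ᶠ v ∈ H.verts, μ v

/-- The fractional independence number `α*`. -/
def fracIndepNum (H : HGraph V) : ℝ :=
  sSup {w | ∃ μ : V → ℝ, H.IsFracIndep μ ∧ H.weight μ = w}

/-- A fractional edge cover of a set `X` of vertices. -/
def IsFracEdgeCover (H : HGraph V) (X : Set V) (γ : Set V → ℝ) : Prop :=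
  (∀ e, 0 ≤ γ e) ∧ (∀ e, e ∉ H.edges → γ e = 0) ∧
    ∀ v ∈ X, 1 ≤ ∑ᶠ e ∈ {e ∈ H.edges | v ∈ e}, γ e

/-- The weight of an edge-weighting. -/
def coverWeight (H : HGraph V) (γ : Set V → ℝ) : ℝ := ∑ᶠ e ∈ H.edges, γ e

/-- `ρ*_H(X)`: the fractional edge cover number of a set `X` of vertices. -/
def fracCoverOf (H : HGraph V) (X : Set V) : ℝ :=
  sInf {w | ∃ γ : Set V → ℝ, H.IsFracEdgeCover X γ ∧ H.coverWeight γ = w}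

/-- The fractional edge cover number `ρ*(H)`. -/
def fracEdgeCoverNum (H : HGraph V) : ℝ := H.fracCoverOf H.verts

/-- A tree decomposition of a hypergraph. -/
structure TreeDecomp (H : HGraph V) where
  n : ℕ
  tree : SimpleGraph (Fin n)
  isTree : tree.IsTree
  bag : Fin n → Set V
  bag_subset : ∀ t, bag t ⊆ H.verts
  verts_covered : ∀ v ∈ H.verts, ∃ t, v ∈ bag t
  edges_covered : ∀ e ∈ H.edges, ∃ t, e ⊆ bag t
  bags_connected : ∀ (v : V) (t₁ t₂ : Fin n) (h₁ : v ∈ bag t₁) (h₂ : v ∈ bag t₂),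
    (tree.induce {t | v ∈ bag t}).Reachable ⟨t₁, h₁⟩ ⟨t₂, h₂⟩

/-- The `μ`-width of a tree decomposition: the maximum `μ`-weight of a bag. -/
def TreeDecomp.muWidth {H : HGraph V} (td : H.TreeDecomp) (μ : V → ℝ) : ℝ :=
  ⨆ t, ∑ᶠ v ∈ td.bag t, μ v

/-- The `μ`-width of a hypergraph: minimum `μ`-width over tree decompositions. -/
def muWidth (H : HGraph V) (μ : V → ℝ) : ℝ :=
  sInf {w | ∃ td : H.TreeDecomp, td.muWidth μ = w}

/-- The adaptive width `aw(H)`: supremum of the `μ`-widths over fractional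
independent sets `μ`. -/
def adaptiveWidth (H : HGraph V) : ℝ :=
  sSup {w | ∃ μ : V → ℝ, H.IsFracIndep μ ∧ H.muWidth μ = w}

/-- The fractional hypertreewidth `fhtw(H)`. -/
def fhtw (H : HGraph V) : ℝ :=
  sInf {w | ∃ td : H.TreeDecomp, (⨆ t, H.fracCoverOf (td.bag t)) = w}

/-- Add a new vertex `v'` to the hypergraph and replace the hyperedge `e` by `e ∪ {v'}`. -/
def extendEdge (H : HGraph V) (e : Set V) (he : e ∈ H.edges) (v' : V) :
    HGraph V where
  verts := insert v' H.verts
  edges := (H.edges \ {e}) ∪ {insert v' e}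
  edge_nonempty := by
    rintro f (⟨hf, -⟩ | hf)
    · exact H.edge_nonempty f hf
    · rw [Set.mem_singleton_iff] at hf; subst hf; exact ⟨v', Set.mem_insert _ _⟩
  edge_subset := by
    rintro f (⟨hf, -⟩ | hf)
    · exact (H.edge_subset f hf).trans (Set.subset_insert _ _)
    · rw [Set.mem_singleton_iff] at hf; subst hf
      exact Set.insert_subset_insert (H.edge_subset e he)

end HGraph

/-! ### Digraphs -/

namespace Digraph

variable {V A B : Type}

/-- `u` reaches `v` by a directed path (possibly of length 0). -/
def Reaches (G : Digraph V) (u v : V) : Prop := Relation.ReflTransGen G.Adj u v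

/-- `R(u)`: the set of vertices reachable from `u` (including `u`). -/
def reachSet (G : Digraph V) (u : V) : Set V := {v | G.Reaches u v}

/-- The setoid whose classes are the strongly connected components. -/
def sccSetoid (G : Digraph V) : Setoid V where
  r u v := G.Reaches u v ∧ G.Reaches v u
  iseqv := ⟨fun _ => ⟨.refl, .refl⟩, fun h => ⟨h.2, h.1⟩,
    fun h₁ h₂ => ⟨h₁.1.trans h₂.1, h₂.2.trans h₁.2⟩⟩

/-- The condensation `H/∼`: the loop-free DAG obtained by contracting each strongly
connected component to a single vertex. -/
def cond (G : Digraph V) : Digraph (Quotient G.sccSetoid) where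
  Adj X Y := X ≠ Y ∧ ∃ a b, Quotient.mk G.sccSetoid a = X ∧
    Quotient.mk G.sccSetoid b = Y ∧ G.Adj a b

/-- `v` lies in a source component: its strongly connected component is not
reachable from any other component. -/
def InSourceComp (G : Digraph V) (v : V) : Prop := ∀ u, G.Reaches u v → G.Reaches v u

/-- `v` is a source: a vertex of in-degree `0`. -/
def IsSrc (G : Digraph V) (v : V) : Prop := ∀ u, ¬ G.Adj u v

/-- The reachability hypergraph `R(H)` of a digraph: vertices `V(H)`, one hyperedge
`R(s)` for each (representative `s` of a) source component. -/
def reachHyp (G : Digraph V) : HGraph V where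
  verts := Set.univ
  edges := {e | ∃ s, G.InSourceComp s ∧ e = G.reachSet s}
  edge_nonempty := by rintro e ⟨s, -, rfl⟩; exact ⟨s, Relation.ReflTransGen.refl⟩
  edge_subset := fun e _ => Set.subset_univ e

/-- The contour `Γ(H)` of a digraph: the reachability hypergraph with all vertices of
source components deleted (empty hyperedges discarded). -/
def contour (G : Digraph V) : HGraph V where
  verts := {v | ¬ G.InSourceComp v}
  edges := {e | (∃ s, G.InSourceComp s ∧
    e = G.reachSet s \ {v | G.InSourceComp v}) ∧ e.Nonempty}
  edge_nonempty := fun _ he => he.2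
  edge_subset := by rintro e ⟨⟨s, -, rfl⟩, -⟩ v hv; exact hv.2

/-- The reachability hypergraph of a DAG: one hyperedge `R(s)` for each in-degree `0`
vertex `s`. -/
def dagReachHyp (G : Digraph V) : HGraph V where
  verts := Set.univ
  edges := {e | ∃ s, G.IsSrc s ∧ e = G.reachSet s}
  edge_nonempty := by rintro e ⟨s, -, rfl⟩; exact ⟨s, Relation.ReflTransGen.refl⟩
  edge_subset := fun e _ => Set.subset_univ e

/-- The contour of a DAG: the reachability hypergraph with all sources deleted. -/
def dagContour (G : Digraph V) : HGraph V where
  verts := {v | ¬ G.IsSrc v}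
  edges := {e | (∃ s, G.IsSrc s ∧ e = G.reachSet s \ {v | G.IsSrc v}) ∧ e.Nonempty}
  edge_nonempty := fun _ he => he.2
  edge_subset := by rintro e ⟨⟨s, -, rfl⟩, -⟩ v hv; exact hv.2

/-- A homomorphism of digraphs: a map preserving arcs. -/
def IsHom (H : Digraph A) (G : Digraph B) (φ : A → B) : Prop :=
  ∀ ⦃u v⦄, H.Adj u v → G.Adj (φ u) (φ v)

/-- The tensor product of digraphs. -/
def tensor (G : Digraph A) (F : Digraph B) : Digraph (A × B) where
  Adj x y := G.Adj x.1 y.1 ∧ F.Adj x.2 y.2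

/-- The induced subdigraph on a set of vertices. -/
def induce (G : Digraph A) (S : Set A) : Digraph S where
  Adj a b := G.Adj a.1 b.1

/-- The quotient digraph `H/σ` of a digraph by a partition (setoid) of its vertices. -/
def quot (H : Digraph A) (σ : Setoid A) : Digraph (Quotient σ) where
  Adj X Y := ∃ a b, Quotient.mk σ a = X ∧ Quotient.mk σ b = Y ∧ H.Adj a b

/-- A loop-free digraph. -/
def LoopFree (H : Digraph A) : Prop := ∀ v, ¬ H.Adj v v

/-- A digraph without directed cycles (in particular, without loops). -/
def IsAcyclic (H : Digraph A) : Prop := ∀ u v, H.Adj u v → ¬ H.Reaches v u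

/-- A canonical DAG: a DAG in which every vertex has in-degree 0 or out-degree 0. -/
def IsCanonicalDAG (H : Digraph A) : Prop :=
  H.IsAcyclic ∧ ∀ v, (∀ u, ¬ H.Adj u v) ∨ (∀ u, ¬ H.Adj v u)

/-- `t` lies in a sink component: from its strongly connected component no other
component is reachable. -/
def IsSinkVert (H : Digraph A) (t : A) : Prop := ∀ v, H.Reaches t v → H.Reaches v t

/-- Sink deletion: delete all vertices of the strongly connected component of `t`. -/
def sinkDelete (H : Digraph A) (t : A) :
    Digraph {v : A // ¬ (H.Reaches v t ∧ H.Reaches t v)} where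
  Adj a b := H.Adj a.1 b.1

/-- Loop deletion: delete the loop at `u`. -/
def deleteLoop (H : Digraph A) (u : A) : Digraph A where
  Adj a b := H.Adj a b ∧ ¬(a = u ∧ b = u)

/-- The number of sources (in-degree `0` vertices) of the condensation `H/∼`. -/
def numSources (H : Digraph A) : ℕ :=
  {X : Quotient H.sccSetoid | ∀ Y, ¬ H.cond.Adj Y X}.ncard

end Digraph

/-- The number of homomorphisms from `H` to `G`. -/
def homCount {A B : Type} (H : Digraph A) (G : Digraph B) : ℕ :=
  Nat.card {φ : A → B // H.IsHom G φ}

/-- Two digraphs are isomorphic: a bijection of the vertex sets preserving arcs in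
both directions. -/
def DigraphIso {A B : Type} (H : Digraph A) (G : Digraph B) : Prop :=
  ∃ e : A ≃ B, ∀ u v, H.Adj u v ↔ G.Adj (e u) (e v)

/-- The number of subgraphs of `G` (pairs of a vertex subset and an arc subset of `G`
among those vertices) that are isomorphic to `H`. -/
def subCount {A B : Type} (H : Digraph A) (G : Digraph B) : ℕ :=
  Nat.card {p : Set B × (B → B → Prop) //
    (∀ a b, p.2 a b → a ∈ p.1 ∧ b ∈ p.1 ∧ G.Adj a b) ∧
    DigraphIso H (Digraph.mk fun (a b : p.1) => p.2 a b)}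

/-- The number of vertex subsets of `G` inducing a subgraph isomorphic to `H`. -/
def indSubCount {A B : Type} (H : Digraph A) (G : Digraph B) : ℕ :=
  Nat.card {S : Set B // DigraphIso H (G.induce S)}

/-- `H'` is an arc supergraph of the loop-free digraph `H`: a loop-free digraph on the
same vertex set whose arc set contains that of `H`. -/
def ArcSupergraph {A : Type} (H H' : Digraph A) : Prop :=
  H'.LoopFree ∧ ∀ u v, H.Adj u v → H'.Adj u v

/-- The setoid identifying exactly `u` and `v`. -/
def pairSetoid {A : Type} (u v : A) : Setoid A where
  r a b := a = b ∨ (a ∈ ({u, v} : Set A) ∧ b ∈ ({u, v} : Set A))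
  iseqv := by
    refine ⟨fun _ => Or.inl rfl, ?_, ?_⟩
    · rintro a b (rfl | ⟨h₁, h₂⟩)
      · exact Or.inl rfl
      · exact Or.inr ⟨h₂, h₁⟩
    · rintro a b c (rfl | ⟨h₁, h₂⟩) h
      · exact h
      · rcases h with rfl | ⟨h₃, h₄⟩
        · exact Or.inr ⟨h₁, h₂⟩
        · exact Or.inr ⟨h₁, h₄⟩

/-- Arc contraction: identify the endpoints of the arc `(u,v)`; arcs between `u` and
`v` do not yield a loop. -/
def Digraph.contractArc {A : Type} (H : Digraph A) (u v : A) :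
    Digraph (Quotient (pairSetoid u v)) where
  Adj X Y := ∃ a b, Quotient.mk (pairSetoid u v) a = X ∧ Quotient.mk (pairSetoid u v) b = Y ∧
    H.Adj a b ∧ ¬(a ≠ b ∧ a ∈ ({u, v} : Set A) ∧ b ∈ ({u, v} : Set A))

/-- `MRMinor M H`: `M` is a monotone reversible minor of `H`, i.e. `M` can be
obtained (up to isomorphism) from `H` by a finite sequence of sink deletions,
arc contractions, and loop deletions. -/
inductive MRMinor : ∀ {A : Type}, Digraph A → ∀ {B : Type}, Digraph B → Prop
  | of_iso {A B : Type} {M : Digraph A} {H : Digraph B} :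
      DigraphIso M H → MRMinor M H
  | sink_del {A B : Type} {M : Digraph A} {H : Digraph B} (t : B) :
      H.IsSinkVert t → MRMinor M (H.sinkDelete t) → MRMinor M H
  | contract {A B : Type} {M : Digraph A} {H : Digraph B} (u v : B) :
      H.Adj u v → MRMinor M (H.contractArc u v) → MRMinor M H
  | loop_del {A B : Type} {M : Digraph A} {H : Digraph B} (u : B) :
      H.Adj u u → MRMinor M (H.deleteLoop u) → MRMinor M H

/-- `SinkDelSeq H F`: `F` is obtained from `H` by a finite sequence of sink deletions. -/
inductive SinkDelSeq : ∀ {A : Type}, Digraph A → ∀ {B : Type}, Digraph B → Prop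
  | refl {A : Type} (H : Digraph A) : SinkDelSeq H H
  | step {A : Type} {H : Digraph A} (t : A) {B : Type} {F : Digraph B} :
      H.IsSinkVert t → SinkDelSeq (H.sinkDelete t) F → SinkDelSeq H F

/-- The directed split of an undirected graph `F`: vertices `V(F) ⊕ E(F)`, with arcs
from each edge `e = {u,v}` to `u` and to `v`. -/
def dsplit {α : Type} (F : SimpleGraph α) : Digraph (α ⊕ F.edgeSet) where
  Adj x y :=
    match x, y with
    | Sum.inr e, Sum.inl u => u ∈ e.1
    | _, _ => False

/-- `D` has an induced matching gadget of size `k`: arcs `(s i, w i)` with the `w i`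
pairwise distinct such that no source of `D` reaches two distinct `w i`. -/
def HasIMG {A : Type} (D : Digraph A) (k : ℕ) : Prop :=
  ∃ s w : Fin k → A, (∀ i, D.Adj (s i) (w i)) ∧ Function.Injective w ∧
    ∀ x, D.IsSrc x → ∀ i j, D.Reaches x (w i) → D.Reaches x (w j) → i = j

/-- The maximum size of an induced matching gadget of `D`. -/
def imgNum {A : Type} (D : Digraph A) : ℕ := sSup {k | HasIMG D k}

/-- A fractional cover of a DAG `D`: nonnegative weights on the sources such that each
non-source is covered with total weight at least 1; the total weight is at least 1. -/
def Digraph.IsFracCover {A : Type} (D : Digraph A) (ψ : A → ℝ) : Prop :=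
  (∀ s, 0 ≤ ψ s) ∧ (∀ s, ¬ D.IsSrc s → ψ s = 0) ∧
    (∀ v, ¬ D.IsSrc v → 1 ≤ ∑ᶠ s ∈ {s | D.IsSrc s ∧ v ∈ D.reachSet s}, ψ s) ∧
    1 ≤ ∑ᶠ s ∈ {s | D.IsSrc s}, ψ s

/-- The fractional cover number of a DAG: the minimum weight of a fractional cover. -/
def Digraph.dagFracCoverNum {A : Type} (D : Digraph A) : ℝ :=
  sInf {w | ∃ ψ : A → ℝ, D.IsFracCover ψ ∧ (∑ᶠ s ∈ {s | D.IsSrc s}, ψ s) = w}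

/-- The fractional cover number `ρ*(H)` of a digraph: the fractional cover number of
its condensation. -/
def Digraph.fracCoverNum {A : Type} (G : Digraph A) : ℝ := G.cond.dagFracCoverNum

/-!
The quotient map `q : V → H/∼` preserves and reflects reachability and membership in a
source component, so `Γ(H)` is the pullback (blow-up) of `Γ(H/∼)` along `q`: every
vertex `X` is replaced by the class `q⁻¹(X)` and every hyperedge by its preimage. Blowing up
changes neither `ρ*`, because hyperedges correspond bijectively, nor `α*`, provided every
vertex lies in a hyperedge: a weighting of the blow-up is pushed forward by summing over the classes, and a
weighting of `Γ(H/∼)` is pulled back by putting each weight on one representative.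
-/

open Function

section FiberSum

variable {V W : Type}

def fiberSum (f : V → W) (μ : V → ℝ) (w : W) : ℝ := ∑ᶠ v ∈ f ⁻¹' {w}, μ v

theorem finsum_mem_preimage_eq_finsum_fiberSum [Finite V] [Finite W] (f : V → W)
    (μ : V → ℝ) (T : Set W) : ∑ᶠ v ∈ f ⁻¹' T, μ v = ∑ᶠ w ∈ T, fiberSum f μ w := by
  rw [← Set.biUnion_preimage_singleton,
    finsum_mem_biUnion (Set.pairwiseDisjoint_fiber f T) T.toFinite fun _ _ => Set.toFinite _]
  rfl

theorem fiberSum_extend_surjInv {f : V → W} (hf : Surjective f) (ν : W → ℝ) :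
    fiberSum f (extend (surjInv hf) ν 0) = ν := by
  ext w
  rw [fiberSum, finsum_mem_def, finsum_eq_single _ (surjInv hf w)]
  · rw [Set.indicator_of_mem (by simp [surjInv_eq hf]),
      (injective_surjInv hf).extend_apply]
  · rintro v hv
    by_cases hvw : f v = w
    · rw [Set.indicator_of_mem (show v ∈ f ⁻¹' {w} from hvw), extend_apply']
      · rfl
      · rintro ⟨w', rfl⟩
        rw [surjInv_eq hf] at hvw
        exact hv (hvw ▸ rfl)
    · exact Set.indicator_of_notMem (show v ∉ f ⁻¹' {w} from hvw) _

theorem finsum_mem_mono_of_nonneg {α : Type} [Finite α] {μ : α → ℝ} (hμ : ∀ a, 0 ≤ μ a)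
    {s t : Set α} (hst : s ⊆ t) : ∑ᶠ a ∈ s, μ a ≤ ∑ᶠ a ∈ t, μ a := by
  rw [finsum_mem_def, finsum_mem_def]
  exact finsum_le_finsum' (Set.toFinite _) (Set.toFinite _)
    (Set.indicator_le_indicator_of_subset hst hμ)

end FiberSum

namespace HGraph

variable {V W : Type}

theorem ext {K L : HGraph V} (hverts : K.verts = L.verts) (hedges : K.edges = L.edges) :
    K = L := by
  cases K; cases L; subst hverts hedges; rfl

def comap (K : HGraph W) (f : V → W) (hf : Surjective f) : HGraph V where
  verts := f ⁻¹' K.verts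
  edges := Set.preimage f '' K.edges
  edge_nonempty := by
    rintro _ ⟨e, he, rfl⟩
    exact (K.edge_nonempty e he).preimage hf
  edge_subset := by
    rintro _ ⟨e, he, rfl⟩
    exact Set.preimage_mono (K.edge_subset e he)

variable {K : HGraph W} {f : V → W} {hf : Surjective f}

theorem IsFracIndep.fiberSum_of_comap [Finite V] (hcov : ∀ w ∈ K.verts, ∃ e ∈ K.edges, w ∈ e)
    {μ : V → ℝ} (hμ : (K.comap f hf).IsFracIndep μ) : K.IsFracIndep (fiberSum f μ) := by
  have : Finite W := .of_surjective f hf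
  obtain ⟨hbound, hzero, hedge⟩ := hμ
  have hnonneg (w : W) : 0 ≤ fiberSum f μ w :=
    finsum_nonneg fun v => finsum_nonneg fun _ => (hbound v).1
  have hzero' (w : W) (hw : w ∉ K.verts) : fiberSum f μ w = 0 :=
    finsum_mem_eq_zero_of_forall_eq_zero fun v hv => hzero v fun hv' => hw ((show f v = w from hv) ▸ hv')
  have hedge' (e : Set W) (he : e ∈ K.edges) : ∑ᶠ w ∈ e, fiberSum f μ w ≤ 1 := by
    rw [← finsum_mem_preimage_eq_finsum_fiberSum]
    exact hedge _ ⟨e, he, rfl⟩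
  refine ⟨fun w => ⟨hnonneg w, ?_⟩, hzero', hedge'⟩
  by_cases hw : w ∈ K.verts
  · obtain ⟨e, he, hwe⟩ := hcov w hw
    calc fiberSum f μ w = ∑ᶠ u ∈ ({w} : Set W), fiberSum f μ u := finsum_mem_singleton.symm
      _ ≤ ∑ᶠ u ∈ e, fiberSum f μ u :=
        finsum_mem_mono_of_nonneg hnonneg (Set.singleton_subset_iff.2 hwe)
      _ ≤ 1 := hedge' e he
  · rw [hzero' w hw]
    exact zero_le_one

theorem IsFracIndep.extend_surjInv [Finite V] {ν : W → ℝ} (hν : K.IsFracIndep ν) :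
    (K.comap f hf).IsFracIndep (extend (surjInv hf) ν 0) := by
  have : Finite W := .of_surjective f hf
  obtain ⟨hbound, hzero, hedge⟩ := hν
  refine ⟨fun v => ?_, fun v hv => ?_, ?_⟩
  · by_cases hv : ∃ w, surjInv hf w = v
    · obtain ⟨w, rfl⟩ := hv
      rw [(injective_surjInv hf).extend_apply]
      exact hbound w
    · rw [extend_apply' _ _ _ hv]
      exact ⟨le_rfl, zero_le_one⟩
  · by_cases hv' : ∃ w, surjInv hf w = v
    · obtain ⟨w, rfl⟩ := hv'
      rw [(injective_surjInv hf).extend_apply]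
      exact hzero w fun hw => hv (by simpa [comap, surjInv_eq hf] using hw)
    · exact extend_apply' _ _ _ hv'
  · rintro _ ⟨e, he, rfl⟩
    rw [finsum_mem_preimage_eq_finsum_fiberSum, fiberSum_extend_surjInv]
    exact hedge e he

theorem fracIndepNum_comap [Finite V] (K : HGraph W) (f : V → W) (hf : Surjective f)
    (hcov : ∀ w ∈ K.verts, ∃ e ∈ K.edges, w ∈ e) :
    (K.comap f hf).fracIndepNum = K.fracIndepNum := by
  have : Finite W := .of_surjective f hf
  have hweight (μ : V → ℝ) : (K.comap f hf).weight μ = K.weight (fiberSum f μ) :=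
    finsum_mem_preimage_eq_finsum_fiberSum f μ K.verts
  unfold fracIndepNum
  congr 1
  ext x
  constructor
  · rintro ⟨μ, hμ, rfl⟩
    exact ⟨_, hμ.fiberSum_of_comap hcov, (hweight μ).symm⟩
  · rintro ⟨ν, hν, rfl⟩
    exact ⟨_, hν.extend_surjInv, by rw [hweight, fiberSum_extend_surjInv]⟩

theorem comap_edges_mem (v : V) :
    {e ∈ (K.comap f hf).edges | v ∈ e} = Set.preimage f '' {e ∈ K.edges | f v ∈ e} := by
  ext e
  constructor
  · rintro ⟨⟨e', he', rfl⟩, hv⟩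
    exact ⟨e', ⟨he', hv⟩, rfl⟩
  · rintro ⟨e', ⟨he', hv⟩, rfl⟩
    exact ⟨⟨e', he', rfl⟩, hv⟩

theorem finsum_mem_comap_edges_mem (γ : Set V → ℝ) (v : V) :
    ∑ᶠ e ∈ {e ∈ (K.comap f hf).edges | v ∈ e}, γ e =
      ∑ᶠ e ∈ {e ∈ K.edges | f v ∈ e}, γ (f ⁻¹' e) := by
  rw [comap_edges_mem, finsum_mem_image (hf.preimage_injective.injOn)]

theorem coverWeight_comap (γ : Set V → ℝ) :
    (K.comap f hf).coverWeight γ = K.coverWeight (γ ∘ Set.preimage f) :=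
  finsum_mem_image hf.preimage_injective.injOn

theorem IsFracEdgeCover.comp_preimage {X : Set W} {γ : Set V → ℝ}
    (hγ : (K.comap f hf).IsFracEdgeCover (f ⁻¹' X) γ) :
    K.IsFracEdgeCover X (γ ∘ Set.preimage f) := by
  obtain ⟨hnonneg, hzero, hcover⟩ := hγ
  refine ⟨fun e => hnonneg _, fun e he => hzero _ (hf.preimage_injective.mem_set_image.not.2 he),
    fun w hw => ?_⟩
  obtain ⟨v, rfl⟩ := hf w
  have hcover_v := hcover v hw
  rwa [finsum_mem_comap_edges_mem] at hcover_v

theorem IsFracEdgeCover.extend_preimage {X : Set W} {γ : Set W → ℝ}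
    (hγ : K.IsFracEdgeCover X γ) :
    (K.comap f hf).IsFracEdgeCover (f ⁻¹' X) (extend (Set.preimage f) γ 0) := by
  obtain ⟨hnonneg, hzero, hcover⟩ := hγ
  refine ⟨fun e => ?_, fun e he => ?_, fun v hv => ?_⟩
  · by_cases he : ∃ e', f ⁻¹' e' = e
    · obtain ⟨e', rfl⟩ := he
      rw [hf.preimage_injective.extend_apply]
      exact hnonneg e'
    · rw [extend_apply' _ _ _ he]
      rfl
  · by_cases he' : ∃ e', f ⁻¹' e' = e
    · obtain ⟨e', rfl⟩ := he'
      rw [hf.preimage_injective.extend_apply]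
      exact hzero e' fun h => he ⟨e', h, rfl⟩
    · exact extend_apply' _ _ _ he'
  · rw [finsum_mem_comap_edges_mem]
    simp only [hf.preimage_injective.extend_apply]
    exact hcover (f v) hv

theorem fracCoverOf_comap (K : HGraph W) (f : V → W) (hf : Surjective f) (X : Set W) :
    (K.comap f hf).fracCoverOf (f ⁻¹' X) = K.fracCoverOf X := by
  unfold fracCoverOf
  congr 1
  ext x
  constructor
  · rintro ⟨γ, hγ, rfl⟩
    exact ⟨_, hγ.comp_preimage, (coverWeight_comap γ).symm⟩
  · rintro ⟨γ, hγ, rfl⟩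
    refine ⟨_, hγ.extend_preimage, ?_⟩
    rw [coverWeight_comap, extend_comp hf.preimage_injective]

theorem fracEdgeCoverNum_comap (K : HGraph W) (f : V → W) (hf : Surjective f) :
    (K.comap f hf).fracEdgeCoverNum = K.fracEdgeCoverNum :=
  fracCoverOf_comap K f hf K.verts

end HGraph

namespace Digraph

variable {V : Type} (G : Digraph V)

theorem Reaches.cond_mk {u v : V} (h : G.Reaches u v) :
    G.cond.Reaches (Quotient.mk _ u) (Quotient.mk _ v) := by
  induction h with
  | refl => exact .refl
  | @tail b c _ hbc ih =>
    by_cases hq : Quotient.mk G.sccSetoid b = Quotient.mk _ c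
    · rwa [← hq]
    · exact ih.tail ⟨hq, b, c, rfl, rfl, hbc⟩

theorem Reaches.of_cond {X Y : Quotient G.sccSetoid} (h : G.cond.Reaches X Y) {u v : V}
    (hu : Quotient.mk _ u = X) (hv : Quotient.mk _ v = Y) : G.Reaches u v := by
  induction h generalizing v with
  | refl => exact (Quotient.exact (hu.trans hv.symm)).1
  | tail _ hXY ih =>
    obtain ⟨-, a, b, rfl, hb, hab⟩ := hXY
    exact (ih rfl).trans (.head hab (Quotient.exact (hb.trans hv.symm)).1)

theorem cond_reaches_mk_iff {u v : V} :
    G.cond.Reaches (Quotient.mk _ u) (Quotient.mk _ v) ↔ G.Reaches u v :=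
  ⟨fun h => Reaches.of_cond G h rfl rfl, Reaches.cond_mk G⟩

theorem cond_inSourceComp_mk_iff {v : V} :
    G.cond.InSourceComp (Quotient.mk _ v) ↔ G.InSourceComp v := by
  constructor
  · intro h u hu
    exact (cond_reaches_mk_iff G).1 (h _ (Reaches.cond_mk G hu))
  · intro h X hX
    obtain ⟨u, rfl⟩ := Quotient.mk_surjective X
    exact Reaches.cond_mk G (h u (Reaches.of_cond G hX rfl rfl))

theorem preimage_mk_cond_reachSet_diff (s : V) :
    Quotient.mk _ ⁻¹' (G.cond.reachSet (Quotient.mk _ s) \ {X | G.cond.InSourceComp X}) =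
      G.reachSet s \ {v | G.InSourceComp v} := by
  ext v
  simp only [reachSet, Set.mem_preimage, Set.mem_sdiff, Set.mem_ofPred_eq,
    cond_reaches_mk_iff, cond_inSourceComp_mk_iff]

theorem contour_eq_comap_cond :
    G.contour = G.cond.contour.comap (Quotient.mk _) Quotient.mk_surjective := by
  refine HGraph.ext ?_ ?_
  · ext v
    exact (not_congr (cond_inSourceComp_mk_iff G)).symm
  · ext e
    constructor
    · rintro ⟨⟨s, hs, rfl⟩, hne⟩
      rw [← preimage_mk_cond_reachSet_diff] at hne ⊢
      exact ⟨_, ⟨⟨_, (cond_inSourceComp_mk_iff G).2 hs, rfl⟩, Set.nonempty_of_nonempty_preimage hne⟩, rfl⟩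
    · rintro ⟨_, ⟨⟨S, hS, rfl⟩, hne⟩, rfl⟩
      obtain ⟨s, rfl⟩ := Quotient.mk_surjective S
      rw [preimage_mk_cond_reachSet_diff]
      refine ⟨⟨s, (cond_inSourceComp_mk_iff G).1 hS, rfl⟩, ?_⟩
      rw [← preimage_mk_cond_reachSet_diff]
      exact hne.preimage Quotient.mk_surjective

theorem exists_inSourceComp_reaches [Finite V] (v : V) :
    ∃ s, G.InSourceComp s ∧ G.Reaches s v := by
  obtain ⟨s, hsv, hmax⟩ :=
    Set.Finite.exists_maximalFor G.reachSet {u | G.Reaches u v} (Set.toFinite _) ⟨v, .refl⟩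
  refine ⟨s, fun u hus => ?_, hsv⟩
  exact hmax (hus.trans hsv) (fun w hsw => hus.trans hsw) .refl

theorem contour_verts_covered [Finite V] :
    ∀ v ∈ G.contour.verts, ∃ e ∈ G.contour.edges, v ∈ e := by
  intro v hv
  obtain ⟨s, hs, hsv⟩ := G.exists_inSourceComp_reaches v
  exact ⟨_, ⟨⟨s, hs, rfl⟩, v, hsv, hv⟩, hsv, hv⟩

end Digraph

theorem stmt2 {V : Type} [Fintype V] (H : Digraph V) :
    H.contour.fracIndepNum = H.cond.contour.fracIndepNum ∧
      H.contour.fracEdgeCoverNum = H.cond.contour.fracEdgeCoverNum := by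
  rw [H.contour_eq_comap_cond]
  exact ⟨HGraph.fracIndepNum_comap _ _ _ H.cond.contour_verts_covered,
    HGraph.fracEdgeCoverNum_comap _ _ _⟩
end
end

section
/- Let H be a digraph and let H' be a quotient of H. Then the fractional cover number does not increase under taking quotients: ρ*(H') ≤ ρ*(H). -/
noncomputable section

/-!
The map `[a] ↦ [[a]]` from the condensation of `H` to that of `H/σ` is surjective, preserves
reachability, and every non-source of the target is the image of a non-source. Such a map `g`
pushes a fractional cover forward without changing its weight: each source `x` hands its weight
to a source lying above the image of `x`. A non-source `y = g x` is then covered at least as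
well as `x` was, because every source reaching `x` hands its weight to a source reaching `y`.
-/

section Finsum

variable {α β M : Type*} [AddCommMonoid M]

lemma finsum_mem_le_finsum_mem_of_subset [PartialOrder M] [IsOrderedAddMonoid M]
    {f : α → M} {s t : Set α} (hst : s ⊆ t) (ht : t.Finite) (hf : ∀ x ∈ t, 0 ≤ f x) :
    ∑ᶠ x ∈ s, f x ≤ ∑ᶠ x ∈ t, f x := by
  rw [← finsum_mem_add_sdiff hst ht]
  exact le_add_of_nonneg_right (finsum_nonneg fun x => finsum_nonneg fun hx => hf x hx.1)

lemma finsum_mem_fiberwise [Finite α] [Finite β] (g : α → β) (s : Set α) (t : Set β)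
    (f : α → M) : ∑ᶠ y ∈ t, ∑ᶠ x ∈ s ∩ g ⁻¹' {y}, f x = ∑ᶠ x ∈ s ∩ g ⁻¹' t, f x := by
  have hunion : s ∩ g ⁻¹' t = ⋃ y ∈ t, s ∩ g ⁻¹' {y} := by ext; simp
  have hdisj : t.PairwiseDisjoint fun y => s ∩ g ⁻¹' {y} := fun y _ z _ hyz =>
    Set.disjoint_left.2 fun x hy hz => hyz (hy.2.symm.trans hz.2)
  rw [hunion, finsum_mem_biUnion hdisj (Set.toFinite _) fun _ _ => Set.toFinite _]

end Finsum

namespace Digraph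

variable {A B : Type}

lemma Reaches.quot {H : Digraph A} (σ : Setoid A) {a b : A} (h : H.Reaches a b) :
    (H.quot σ).Reaches (Quotient.mk σ a) (Quotient.mk σ b) :=
  Relation.ReflTransGen.lift _ (fun a b hab => ⟨a, b, rfl, rfl, hab⟩) _ _ h

lemma Reaches.cond {G : Digraph A} {a b : A} (h : G.Reaches a b) :
    G.cond.Reaches (Quotient.mk _ a) (Quotient.mk _ b) := by
  refine Relation.ReflTransGen.lift' _ (fun a b hab => ?_) _ _ h
  by_cases hq : Quotient.mk G.sccSetoid a = Quotient.mk G.sccSetoid b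
  · rw [Function.onFun, hq]
  · exact .single ⟨hq, a, b, rfl, rfl, hab⟩

lemma cond_reaches_mk_iff_s10 {G : Digraph A} {a b : A} :
    G.cond.Reaches (Quotient.mk _ a) (Quotient.mk _ b) ↔ G.Reaches a b := by
  refine ⟨fun h => ?_, Reaches.cond⟩
  have key : ∀ {X Y}, G.cond.Reaches X Y → ∀ a b, Quotient.mk G.sccSetoid a = X →
      Quotient.mk G.sccSetoid b = Y → G.Reaches a b := by
    intro X Y h
    induction h with
    | refl => exact fun a b ha hb => (Quotient.exact (ha.trans hb.symm)).1
    | tail _ hadj ih =>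
      obtain ⟨-, a', b', ha', hb', hab⟩ := hadj
      exact fun a b ha hb =>
        ((ih a a' ha ha').tail hab).trans (Quotient.exact (hb'.trans hb.symm)).1
  exact key h a b rfl rfl

lemma cond_isAcyclic (G : Digraph A) : G.cond.IsAcyclic := by
  intro X Y hXY hYX
  refine hXY.1 ?_
  induction X using Quotient.ind
  induction Y using Quotient.ind
  exact Quotient.sound ⟨cond_reaches_mk_iff_s10.1 (.single hXY), cond_reaches_mk_iff_s10.1 hYX⟩

lemma IsAcyclic.exists_isSrc_reaches [Finite A] {D : Digraph A} (hD : D.IsAcyclic) (v : A) :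
    ∃ s, D.IsSrc s ∧ D.Reaches s v := by
  have : Std.Irrefl (Relation.TransGen D.Adj) := ⟨fun u h => by
    obtain ⟨w, huw, hwu⟩ := Relation.TransGen.head'_iff.1 h
    exact hD u w huw hwu⟩
  obtain ⟨s, hs, hmin⟩ :=
    (Finite.wellFounded_of_trans_of_irrefl (Relation.TransGen D.Adj)).has_min
      {u | D.Reaches u v} ⟨v, .refl⟩
  exact ⟨s, fun u hus => hmin u (Relation.ReflTransGen.head hus hs) (.single hus), hs⟩

lemma IsFracCover.nonempty {D : Digraph A} {ψ : A → ℝ} (hψ : D.IsFracCover ψ) : Nonempty A := by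
  refine not_isEmpty_iff.1 fun _ => ?_
  have hweight := hψ.2.2.2
  rw [Set.eq_empty_of_isEmpty {s | D.IsSrc s}, finsum_mem_empty] at hweight
  norm_num at hweight

lemma IsAcyclic.exists_isFracCover [Finite A] [Nonempty A] {D : Digraph A} (hD : D.IsAcyclic) :
    ∃ ψ, D.IsFracCover ψ := by
  set ψ := Set.indicator {s | D.IsSrc s} (1 : A → ℝ)
  have hψ : ∀ s, 0 ≤ ψ s := Set.indicator_nonneg fun _ _ => zero_le_one
  have hle : ∀ t : Set A, ∀ s ∈ t, D.IsSrc s → 1 ≤ ∑ᶠ x ∈ t, ψ x := fun t s hs hsrc => by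
    calc (1 : ℝ) = ∑ᶠ x ∈ ({s} : Set A), ψ x := by simp [ψ, Set.indicator_of_mem, hsrc]
      _ ≤ _ := finsum_mem_le_finsum_mem_of_subset (by simpa) (Set.toFinite t) fun x _ => hψ x
  refine ⟨ψ, hψ, fun s hs => Set.indicator_of_notMem hs _, fun v _ => ?_, ?_⟩
  · obtain ⟨s, hsrc, hsv⟩ := hD.exists_isSrc_reaches v
    exact hle _ s ⟨hsrc, hsv⟩ hsrc
  · obtain ⟨s, hsrc, -⟩ := hD.exists_isSrc_reaches (Classical.arbitrary A)
    exact hle _ s hsrc hsrc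

lemma IsFracCover.map [Finite A] [Finite B] {D : Digraph A} {D' : Digraph B}
    (hD' : D'.IsAcyclic) (g : A → B)
    (hg_reaches : ∀ ⦃x y⦄, D.Reaches x y → D'.Reaches (g x) (g y))
    (hg_nonsrc : ∀ y, ¬ D'.IsSrc y → ∃ x, g x = y ∧ ¬ D.IsSrc x)
    {ψ : A → ℝ} (hψ : D.IsFracCover ψ) :
    ∃ ψ' : B → ℝ, D'.IsFracCover ψ' ∧
      ∑ᶠ s ∈ {s | D'.IsSrc s}, ψ' s = ∑ᶠ s ∈ {s | D.IsSrc s}, ψ s := by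
  obtain ⟨hψ_nonneg, -, hψ_cover, hψ_weight⟩ := hψ
  choose π hπ_src hπ_reaches using hD'.exists_isSrc_reaches
  let f := fun x => π (g x)
  let ψ' := fun y => ∑ᶠ x ∈ {x | D.IsSrc x} ∩ f ⁻¹' {y}, ψ x
  have hsum (t : Set B) : ∑ᶠ y ∈ t, ψ' y = ∑ᶠ x ∈ {x | D.IsSrc x} ∩ f ⁻¹' t, ψ x :=
    finsum_mem_fiberwise f _ t ψ
  have hweight : ∑ᶠ y ∈ {y | D'.IsSrc y}, ψ' y = ∑ᶠ x ∈ {x | D.IsSrc x}, ψ x := by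
    have hall : {x | D.IsSrc x} ⊆ f ⁻¹' {y | D'.IsSrc y} := fun x _ => hπ_src (g x)
    rw [hsum, Set.inter_eq_left.2 hall]
  refine ⟨ψ', ⟨fun y => finsum_nonneg fun x => finsum_nonneg fun _ => hψ_nonneg x,
    fun y hy => ?_, fun y hy => ?_, hweight ▸ hψ_weight⟩, hweight⟩
  · exact finsum_mem_of_eqOn_zero fun x hx => (hy (hx.2 ▸ hπ_src (g x))).elim
  · obtain ⟨x, rfl, hx⟩ := hg_nonsrc y hy
    calc 1 ≤ _ := hψ_cover x hx
      _ ≤ ∑ᶠ s ∈ {s | D.IsSrc s} ∩ f ⁻¹' {z | D'.IsSrc z ∧ g x ∈ D'.reachSet z}, ψ s :=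
        finsum_mem_le_finsum_mem_of_subset
          (fun s ⟨hs, hsx⟩ => ⟨hs, hπ_src _, (hπ_reaches (g s)).trans (hg_reaches hsx)⟩)
          (Set.toFinite _) fun s _ => hψ_nonneg s
      _ = _ := (hsum _).symm

lemma dagFracCoverNum_of_isEmpty [IsEmpty A] (D : Digraph A) : D.dagFracCoverNum = 0 := by
  have hno_cover : {w | ∃ ψ : A → ℝ, D.IsFracCover ψ ∧ (∑ᶠ s ∈ {s | D.IsSrc s}, ψ s) = w} = ∅ :=
    Set.eq_empty_of_forall_notMem fun _ ⟨_, hψ, _⟩ => hψ.nonempty.elim isEmptyElim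
  rw [dagFracCoverNum, hno_cover, Real.sInf_empty]

theorem dagFracCoverNum_le_of_map [Finite A] [Finite B] {D : Digraph A} {D' : Digraph B}
    (hD : D.IsAcyclic) (hD' : D'.IsAcyclic) (g : A → B) (hg : Function.Surjective g)
    (hg_reaches : ∀ ⦃x y⦄, D.Reaches x y → D'.Reaches (g x) (g y))
    (hg_nonsrc : ∀ y, ¬ D'.IsSrc y → ∃ x, g x = y ∧ ¬ D.IsSrc x) :
    D'.dagFracCoverNum ≤ D.dagFracCoverNum := by
  rcases isEmpty_or_nonempty A with _ | _
  · have : IsEmpty B := ⟨fun y => isEmptyElim (hg y).choose⟩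
    rw [dagFracCoverNum_of_isEmpty, dagFracCoverNum_of_isEmpty]
  obtain ⟨ψ₀, hψ₀⟩ := hD.exists_isFracCover
  refine le_csInf ⟨_, ψ₀, hψ₀, rfl⟩ ?_
  rintro _ ⟨ψ, hψ, rfl⟩
  obtain ⟨ψ', hψ', hweight⟩ := hψ.map hD' g hg_reaches hg_nonsrc
  exact csInf_le ⟨1, fun _ ⟨_, h, hw⟩ => hw ▸ h.2.2.2⟩ ⟨ψ', hψ', hweight⟩

def condQuotMap (H : Digraph A) (σ : Setoid A) :
    Quotient H.sccSetoid → Quotient (H.quot σ).sccSetoid :=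
  Quotient.map (Quotient.mk σ) fun _ _ h => ⟨h.1.quot σ, h.2.quot σ⟩

lemma condQuotMap_surjective (H : Digraph A) (σ : Setoid A) :
    Function.Surjective (condQuotMap H σ) := by
  intro Y
  induction Y using Quotient.ind with | _ p
  induction p using Quotient.ind with | _ a
  exact ⟨Quotient.mk _ a, rfl⟩

lemma condQuotMap_reaches {H : Digraph A} {σ : Setoid A} ⦃X Y : Quotient H.sccSetoid⦄
    (h : H.cond.Reaches X Y) :
    (H.quot σ).cond.Reaches (condQuotMap H σ X) (condQuotMap H σ Y) := by
  induction X using Quotient.ind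
  induction Y using Quotient.ind
  exact ((cond_reaches_mk_iff_s10.1 h).quot σ).cond

lemma exists_condQuotMap_eq_not_isSrc {H : Digraph A} {σ : Setoid A}
    (Y : Quotient (H.quot σ).sccSetoid) (hY : ¬ (H.quot σ).cond.IsSrc Y) :
    ∃ X, condQuotMap H σ X = Y ∧ ¬ H.cond.IsSrc X := by
  obtain ⟨Z, hZY, p, q, rfl, rfl, u, w, rfl, rfl, huw⟩ : ∃ Z, (H.quot σ).cond.Adj Z Y := by
    simpa only [IsSrc, not_forall, not_not] using hY
  refine ⟨Quotient.mk _ w, rfl, fun hsrc => hZY ?_⟩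
  have hsame : Quotient.mk H.sccSetoid u = Quotient.mk _ w :=
    by_contra fun hne => hsrc _ ⟨hne, u, w, rfl, rfl, huw⟩
  exact congrArg (condQuotMap H σ) hsame

end Digraph

theorem stmt10 {V : Type} [Fintype V] (H : Digraph V) (σ : Setoid V) :
    (H.quot σ).fracCoverNum ≤ H.fracCoverNum :=
  Digraph.dagFracCoverNum_le_of_map H.cond_isAcyclic (H.quot σ).cond_isAcyclic _
    (H.condQuotMap_surjective σ) Digraph.condQuotMap_reaches
    Digraph.exists_condQuotMap_eq_not_isSrc

end
end

section
/- Every digraph H satisfies α(Γ(H/∼)) = img(H), that is, the independence number of the contour of the condensation of H equals the maximum size of an induced matching gadget of the condensation of H. -/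
noncomputable section

namespace Digraph

variable {A : Type} {D : Digraph A}

lemma isIndepSet_dagContour_iff {I : Set A} :
    D.dagContour.IsIndepSet I ↔ (∀ v ∈ I, ¬ D.IsSrc v) ∧
      ∀ x, D.IsSrc x → ∀ u ∈ I, ∀ v ∈ I, D.Reaches x u → D.Reaches x v → u = v := by
  constructor
  · rintro ⟨hIv, hind⟩
    refine ⟨fun v hv => hIv hv, fun x hx u hu v hv hxu hxv => ?_⟩
    by_contra hne
    exact hind u hu v hv hne _ ⟨⟨x, hx, rfl⟩, u, hxu, hIv hu⟩ ⟨⟨hxu, hIv hu⟩, hxv, hIv hv⟩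
  · rintro ⟨hIv, hind⟩
    refine ⟨hIv, ?_⟩
    rintro u hu v hv hne e ⟨⟨x, hx, rfl⟩, -⟩ ⟨hxu, hxv⟩
    exact hne (hind x hx u hu v hv hxu.1 hxv.1)

variable (D) in
lemma hasIMG_zero : HasIMG D 0 :=
  ⟨Fin.elim0, Fin.elim0, fun i => i.elim0, fun i => i.elim0, fun _ _ i => i.elim0⟩

lemma hasIMG_ncard_of_isIndepSet {I : Set A} (hI : D.dagContour.IsIndepSet I) (hfin : I.Finite) :
    HasIMG D I.ncard := by
  have := hfin.to_subtype
  rw [isIndepSet_dagContour_iff] at hI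
  obtain ⟨hnonsrc, hind⟩ := hI
  let e : Fin I.ncard ≃ I := (Finite.equivFinOfCardEq (Nat.card_coe_set_eq I)).symm
  have hpred : ∀ i, ∃ u, D.Adj u (e i) := fun i => by
    simpa [IsSrc] using hnonsrc _ (e i).2
  choose s hs using hpred
  refine ⟨s, fun i => e i, hs, fun i j hij => e.injective (Subtype.ext hij), ?_⟩
  intro x hx i j hi hj
  exact e.injective (Subtype.ext (hind x hx _ (e i).2 _ (e j).2 hi hj))

lemma isIndepSet_range_of_hasIMG {n : ℕ} {s w : Fin n → A} (hadj : ∀ i, D.Adj (s i) (w i))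
    (hsrc : ∀ x, D.IsSrc x → ∀ i j, D.Reaches x (w i) → D.Reaches x (w j) → i = j) :
    D.dagContour.IsIndepSet (Set.range w) := by
  rw [isIndepSet_dagContour_iff]
  refine ⟨?_, ?_⟩
  · rintro _ ⟨i, rfl⟩ h
    exact h _ (hadj i)
  · rintro x hx _ ⟨i, rfl⟩ _ ⟨j, rfl⟩ hi hj
    rw [hsrc x hx i j hi hj]

lemma exists_isIndepSet_dagContour_ncard_iff_hasIMG (n : ℕ) :
    (∃ I : Set A, D.dagContour.IsIndepSet I ∧ I.ncard = n) ↔ HasIMG D n := by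
  constructor
  · rintro ⟨I, hI, rfl⟩
    by_cases hfin : I.Finite
    · exact hasIMG_ncard_of_isIndepSet hI hfin
    · rw [Set.Infinite.ncard hfin]
      exact hasIMG_zero D
  · rintro ⟨s, w, hadj, hinj, hsrc⟩
    refine ⟨Set.range w, isIndepSet_range_of_hasIMG hadj hsrc, ?_⟩
    rw [Set.ncard_range_of_injective hinj, Nat.card_fin]

variable (D) in
theorem indepNum_dagContour_eq_imgNum : D.dagContour.indepNum = imgNum D := by
  simp only [HGraph.indepNum, imgNum, exists_isIndepSet_dagContour_ncard_iff_hasIMG]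

end Digraph

theorem stmt14_general {V : Type} (H : Digraph V) :
    H.cond.dagContour.indepNum = imgNum H.cond :=
  H.cond.indepNum_dagContour_eq_imgNum

theorem stmt14 {V : Type} [Fintype V] (H : Digraph V) :
    H.cond.dagContour.indepNum = imgNum H.cond :=
  stmt14_general H
end
end
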